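/- If G is a finite connected graph with at least 2 vertices, then 2 ≤ gpg(G) ≤ 2 + max over vertices u of the minimum over neighbours v of u of |ᵤWᵥ|, where ᵤWᵥ = {w ∈ V(G) : d(u,w) = d(v,w)}. -/
import Mathlib


open Finset SimpleGraph

variable {V : Type*}

/-- `S` is in general position in `G`: no shortest path of `G` contains more than
two vertices of `S`. -/
def IsGPSet (G : SimpleGraph V) (S : Set V) : Prop :=
  ∀ ⦃u v : V⦄ (p : G.Walk u v), p.IsPath → p.length = G.dist u v →
    (S ∩ {x | x ∈ p.support}).ncard ≤ 2

open scoped Classical in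
/-- The set of vertices that can legally be played when the set of already selected
vertices is `S`. -/
noncomputable def playable [Fintype V] (G : SimpleGraph V) (S : Finset V) : Finset V :=
  Finset.univ.filter (fun v => v ∉ S ∧ IsGPSet G (↑(insert v S) : Set V))

open scoped Classical in
/-- Value (final set size with optimal play) of the Builder-Blocker general position game
from position `S` with the given player to move (`true` = Builder, the maximiser;
`false` = Blocker, the minimiser), computed with a fuel parameter. -/
noncomputable def gameValAux [Fintype V] (G : SimpleGraph V) : ℕ → Bool → Finset V → ℕ
  | 0, _, S => S.card
  | fuel + 1, turn, S =>
    if h : (playable G S).Nonempty then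
      if turn then (playable G S).sup' h (fun v => gameValAux G fuel (!turn) (insert v S))
      else (playable G S).inf' h (fun v => gameValAux G fuel (!turn) (insert v S))
    else S.card

/-- Value of the Builder-Blocker general position game from position `S`,
with `turn = true` meaning Builder (the maximiser) is to move. Since at most
`Fintype.card V - S.card` further moves are possible, this fuel suffices. -/
noncomputable def gameVal [Fintype V] (G : SimpleGraph V) (turn : Bool) (S : Finset V) : ℕ :=
  gameValAux G (Fintype.card V - S.card) turn S

/-- The B-game general position number: Builder moves first. -/
noncomputable def gpg [Fintype V] (G : SimpleGraph V) : ℕ := gameVal G true ∅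

/-- The B'-game general position number: Blocker moves first. -/
noncomputable def gpg' [Fintype V] (G : SimpleGraph V) : ℕ := gameVal G false ∅

/-- The set of vertices equidistant from `u` and `v`. -/
def eqW (G : SimpleGraph V) (u v : V) : Set V := {w | G.dist u w = G.dist v w}

section Aux
variable {V : Type*}

lemma smallGP (G : SimpleGraph V) {S : Set V} (hS : S.Finite) (h : S.ncard ≤ 2) :
    IsGPSet G S := fun _ _ _ _ _ =>
  le_trans (Set.ncard_le_ncard Set.inter_subset_left hS) h

open scoped Classical in
lemma mem_playable [Fintype V] {G : SimpleGraph V} {S : Finset V} {w : V} :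
    w ∈ playable G S ↔ w ∉ S ∧ IsGPSet G (↑(insert w S) : Set V) := by
  simp [playable]

lemma key_asym [Fintype V] {G : SimpleGraph V} (hG : G.Connected) {S : Set V}
    (hS : IsGPSet G S) {u v w : V} (huv : G.Adj u v) (hu : u ∈ S) (hv : v ∈ S) (hw : w ∈ S)
    (hwu : w ≠ u) (hwv : w ≠ v) (hd : G.dist u w = G.dist v w + 1) : False := by
  classical
  obtain ⟨p, hp⟩ := (hG v w).exists_walk_length_eq_dist
  have hpPath : p.IsPath := p.isPath_of_length_eq_dist hp
  have hus : u ∉ p.support := by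
    intro hmem
    have h1 : G.dist v u ≤ (p.takeUntil u hmem).length := SimpleGraph.dist_le _
    have h2 : G.dist u w ≤ (p.dropUntil u hmem).length := SimpleGraph.dist_le _
    have h3 : (p.takeUntil u hmem).length + (p.dropUntil u hmem).length = p.length := by
      rw [← SimpleGraph.Walk.length_append, SimpleGraph.Walk.take_spec]
    have hvu : 0 < G.dist v u := hG.pos_dist_of_ne (G.ne_of_adj huv).symm
    omega
  have hqPath : (SimpleGraph.Walk.cons huv p).IsPath := by
    rw [SimpleGraph.Walk.cons_isPath_iff]; exact ⟨hpPath, hus⟩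
  have hqlen : (SimpleGraph.Walk.cons huv p).length = G.dist u w := by
    simp [SimpleGraph.Walk.length_cons, hp, hd]
  have hle := hS _ hqPath hqlen
  have hsub : ({u, v, w} : Set V) ⊆ S ∩ {x | x ∈ (SimpleGraph.Walk.cons huv p).support} := by
    intro x hx
    rcases hx with rfl | rfl | rfl
    · exact ⟨hu, by simp⟩
    · exact ⟨hv, by simp⟩
    · exact ⟨hw, by simp [SimpleGraph.Walk.support_cons]⟩
  have h3' : ({u, v, w} : Set V).ncard = 3 := by
    rw [Set.ncard_insert_of_notMem (by simp [G.ne_of_adj huv, Ne.symm hwu]),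
      Set.ncard_insert_of_notMem (by simp [Ne.symm hwv]), Set.ncard_singleton]
  have := Set.ncard_le_ncard hsub (Set.toFinite _)
  omega

lemma keyW [Fintype V] {G : SimpleGraph V} (hG : G.Connected) {S : Set V}
    (hS : IsGPSet G S) {u v w : V} (huv : G.Adj u v) (hu : u ∈ S) (hv : v ∈ S) (hw : w ∈ S)
    (hwu : w ≠ u) (hwv : w ≠ v) : w ∈ eqW G u v := by
  by_contra hne
  have t1 : G.dist u w ≤ G.dist u v + G.dist v w := hG.dist_triangle
  have t2 : G.dist v w ≤ G.dist v u + G.dist u w := hG.dist_triangle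
  have d1 : G.dist u v ≤ 1 := by
    simpa using SimpleGraph.dist_le (SimpleGraph.Walk.cons huv SimpleGraph.Walk.nil)
  have d2 : G.dist v u ≤ 1 := by
    simpa using SimpleGraph.dist_le (SimpleGraph.Walk.cons huv.symm SimpleGraph.Walk.nil)
  have hne' : G.dist u w ≠ G.dist v w := hne
  have : G.dist u w = G.dist v w + 1 ∨ G.dist v w = G.dist u w + 1 := by omega
  rcases this with h | h
  · exact key_asym hG hS huv hu hv hw hwu hwv h
  · exact key_asym hG hS huv.symm hv hu hw hwv hwu h

lemma exists_adj' [Fintype V] {G : SimpleGraph V} (hG : G.Connected)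
    (h2 : 2 ≤ Fintype.card V) (u : V) : ∃ v, G.Adj u v := by
  obtain ⟨w, hw⟩ : ∃ w : V, w ≠ u := Fintype.exists_ne_of_one_lt_card (by omega) u
  obtain ⟨p⟩ := hG.preconnected u w
  cases p with
  | nil => exact absurd rfl hw
  | cons h _ => exact ⟨_, h⟩

lemma gameValAux_lower [Fintype V] (G : SimpleGraph V) (h2 : 2 ≤ Fintype.card V) :
    ∀ (fuel : ℕ) (turn : Bool) (S : Finset V), Fintype.card V ≤ S.card + fuel →
      2 ≤ gameValAux G fuel turn S := by
  classical
  intro fuel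
  induction fuel with
  | zero =>
    intro turn S h
    rw [gameValAux]
    omega
  | succ n ih =>
    intro turn S h
    rw [gameValAux]
    by_cases hne : (playable G S).Nonempty
    · rw [dif_pos hne]
      have hrec : ∀ w ∈ playable G S, 2 ≤ gameValAux G n (!turn) (insert w S) := by
        intro w hw
        have hwS := (mem_playable.mp hw).1
        exact ih (!turn) _ (by rw [Finset.card_insert_of_notMem hwS]; omega)
      cases turn with
      | true =>
        obtain ⟨w, hw⟩ := hne
        rw [if_pos rfl]
        refine le_trans (hrec w hw) ?_
        exact Finset.le_sup' (fun v => gameValAux G n (!true) (insert v S)) hw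
      | false =>
        rw [if_neg (by simp)]
        exact Finset.le_inf' hne _ hrec
    · rw [dif_neg hne]
      by_contra hlt
      push_neg at hlt
      have hcard : S.card < Fintype.card V := by omega
      obtain ⟨w, hw⟩ : ∃ w, w ∉ S := by
        by_contra h'
        push_neg at h'
        have : (Finset.univ : Finset V).card ≤ S.card :=
          Finset.card_le_card (fun x _ => h' x)
        simp at this
        omega
      apply hne
      refine ⟨w, mem_playable.mpr ⟨hw, smallGP G (Set.toFinite _) ?_⟩⟩
      rw [Set.ncard_coe_finset]
      have := Finset.card_insert_le w S
      omega

lemma gameValAux_upper [Fintype V] {G : SimpleGraph V} (hG : G.Connected) {u v : V}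
    (huv : G.Adj u v) :
    ∀ (fuel : ℕ) (turn : Bool) (S : Finset V), u ∈ S → v ∈ S → IsGPSet G ↑S →
      gameValAux G fuel turn S ≤ 2 + (eqW G u v).ncard := by
  classical
  have base : ∀ S : Finset V, u ∈ S → v ∈ S → IsGPSet G ↑S →
      S.card ≤ 2 + (eqW G u v).ncard := by
    intro S hu hv hS
    have hsub : (↑S : Set V) ⊆ insert u (insert v (eqW G u v)) := by
      intro w hw
      by_cases hwu : w = u
      · exact Or.inl hwu
      by_cases hwv : w = v
      · exact Or.inr (Or.inl hwv)
      exact Or.inr (Or.inr (keyW hG hS huv hu hv hw hwu hwv))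
    have h1 := Set.ncard_le_ncard hsub (Set.toFinite _)
    have h2 := Set.ncard_insert_le u (insert v (eqW G u v))
    have h3 := Set.ncard_insert_le v (eqW G u v)
    rw [Set.ncard_coe_finset] at h1
    omega
  intro fuel
  induction fuel with
  | zero => intro turn S hu hv hS; rw [gameValAux]; exact base S hu hv hS
  | succ n ih =>
    intro turn S hu hv hS
    rw [gameValAux]
    by_cases hne : (playable G S).Nonempty
    · rw [dif_pos hne]
      have hrec : ∀ w ∈ playable G S,
          gameValAux G n (!turn) (insert w S) ≤ 2 + (eqW G u v).ncard := fun w hw =>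
        ih (!turn) _ (Finset.mem_insert_of_mem hu) (Finset.mem_insert_of_mem hv)
          ((mem_playable.mp hw).2)
      cases turn with
      | true =>
        rw [if_pos rfl]
        exact Finset.sup'_le hne _ hrec
      | false =>
        obtain ⟨w, hw⟩ := hne
        rw [if_neg (by simp)]
        refine le_trans ?_ (hrec w hw)
        exact Finset.inf'_le (fun v => gameValAux G n (!false) (insert v S)) hw
    · rw [dif_neg hne]; exact base S hu hv hS

end Aux


/-- `2 ≤ gpg(G) ≤ 2 + max_{u} min_{v ∈ N(u)} |ᵤWᵥ|`. -/
theorem stmt_2 {V : Type*} [Fintype V] (G : SimpleGraph V) (hG : G.Connected)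
    (h2 : 2 ≤ Fintype.card V) :
    2 ≤ gpg G ∧
      gpg G ≤ 2 + Finset.univ.sup (fun u : V =>
        sInf ((fun v => (eqW G u v).ncard) '' (G.neighborSet u))) := by
  classical
  constructor
  · have := gameValAux_lower G h2 (Fintype.card V) true ∅ (by simp)
    simpa [gpg, gameVal] using this
  · show gameValAux G (Fintype.card V - (∅ : Finset V).card) true ∅ ≤ _
    obtain ⟨k, hk⟩ : ∃ k, Fintype.card V - (∅ : Finset V).card = k + 1 + 1 :=
      ⟨Fintype.card V - 2, by simp; omega⟩
    rw [hk, gameValAux]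
    have hpne : (playable G ∅).Nonempty := by
      obtain ⟨u⟩ : Nonempty V := Fintype.card_pos_iff.mp (by omega)
      refine ⟨u, mem_playable.mpr ⟨by simp, smallGP G (Set.toFinite _) ?_⟩⟩
      rw [Set.ncard_coe_finset]
      simp
    rw [dif_pos hpne, if_pos rfl]
    apply Finset.sup'_le
    intro u hu
    set N : Set ℕ := (fun v => (eqW G u v).ncard) '' (G.neighborSet u) with hN
    have hNne : N.Nonempty := by
      obtain ⟨v, hv⟩ := exists_adj' hG h2 u
      exact ⟨_, ⟨v, hv, rfl⟩⟩
    obtain ⟨v, hvadj, hveq⟩ : ∃ v, G.Adj u v ∧ (eqW G u v).ncard = sInf N := by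
      obtain ⟨v, hv1, hv2⟩ := Nat.sInf_mem hNne
      exact ⟨v, hv1, hv2⟩
    have hbound : gameValAux G (k + 1) (!true) (insert u ∅) ≤ 2 + sInf N := by
      rw [gameValAux]
      have hvp : v ∈ playable G (insert u ∅) := by
        refine mem_playable.mpr ⟨?_, smallGP G (Set.toFinite _) ?_⟩
        · simp [(G.ne_of_adj hvadj).symm]
        · rw [Set.ncard_coe_finset]
          have h1 := Finset.card_insert_le v (insert u (∅ : Finset V))
          have h2 := Finset.card_insert_le u (∅ : Finset V)
          simp only [Finset.card_empty] at h2
          omega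
      have hnev : (playable G (insert u ∅)).Nonempty := ⟨v, hvp⟩
      rw [dif_pos hnev, if_neg (by simp)]
      have hstep : gameValAux G k (!!true) (insert v (insert u ∅)) ≤ 2 + sInf N := by
        rw [← hveq]
        refine gameValAux_upper hG hvadj k _ _ ?_ ?_ (smallGP G (Set.toFinite _) ?_)
        · simp
        · simp
        · rw [Set.ncard_coe_finset]
          have h1 := Finset.card_insert_le v (insert u (∅ : Finset V))
          have h2 := Finset.card_insert_le u (∅ : Finset V)
          simp only [Finset.card_empty] at h2
          omega
      refine le_trans ?_ hstep
      exact Finset.inf'_le (fun w => gameValAux G k (!!true) (insert w (insert u ∅))) hvp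
    refine le_trans hbound ?_
    rw [hN]
    exact Nat.add_le_add_left
      (Finset.le_sup (f := fun u : V => sInf ((fun v => (eqW G u v).ncard) '' (G.neighborSet u)))
        (Finset.mem_univ u)) 2
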